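/- arXiv:1206.1039 — 2 statements merged into one kernel-verified Lean document; each statement's English description precedes it below -/
import Mathlib

section
/- Let T be the tent map and Z the zigzag map. For every x ∈ [0,1] and every n ∈ ℕ, the n-th iterate of the zigzag map satisfies Z^[n](x) = (-1)^n · T^[n](x). In particular, the sequence of zigzag iterates of a point of [0,1] equals the sequence of tent-map iterates with alternating signs. -/
/-- The tent map: `T x = 2x` for `x ≤ 1/2` and `T x = 2 - 2x` for `x > 1/2`. -/
noncomputable def tentMap (x : ℝ) : ℝ := if x ≤ 1/2 then 2*x else 2 - 2*x

/-- The zigzag map: `Z x = 2x + 2` for `x < -1/2`, `Z x = -2x` for `-1/2 ≤ x ≤ 1/2`,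
and `Z x = 2x - 2` for `x > 1/2`. -/
noncomputable def zigzagMap (x : ℝ) : ℝ :=
  if x < -(1/2) then 2*x + 2 else if x ≤ 1/2 then -2*x else 2*x - 2

lemma tentMap_mem (x : ℝ) (hx : x ∈ Set.Icc (0:ℝ) 1) :
    tentMap x ∈ Set.Icc (0:ℝ) 1 := by
  obtain ⟨h0, h1⟩ := hx
  unfold tentMap
  split <;> constructor <;> linarith

lemma tent_iterate_mem (x : ℝ) (hx : x ∈ Set.Icc (0:ℝ) 1) (n : ℕ) :
    tentMap^[n] x ∈ Set.Icc (0:ℝ) 1 := by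
  induction n with
  | zero => simpa
  | succ m ihm => rw [Function.iterate_succ_apply']; exact tentMap_mem _ ihm

lemma zigzag_eq_neg_tent (x : ℝ) (hx : x ∈ Set.Icc (0:ℝ) 1) :
    zigzagMap x = -tentMap x := by
  obtain ⟨h0, h1⟩ := hx
  unfold zigzagMap tentMap
  split_ifs <;> linarith

lemma zigzag_neg_eq_tent (x : ℝ) (hx : x ∈ Set.Icc (0:ℝ) 1) :
    zigzagMap (-x) = tentMap x := by
  obtain ⟨h0, h1⟩ := hx
  unfold zigzagMap tentMap
  split_ifs <;> linarith

/-- For every `x ∈ [0,1]` and every `n`, the `n`-th zigzag iterate equals the `n`-th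
tent-map iterate with alternating sign: `Z^[n] x = (-1)^n * T^[n] x`. -/
theorem zigzag_iterate_eq_neg_one_pow_mul_tent_iterate :
    ∀ x ∈ Set.Icc (0:ℝ) 1, ∀ n : ℕ,
      zigzagMap^[n] x = (-1 : ℝ)^n * tentMap^[n] x := by
  intro x hx n
  induction n with
  | zero => simp
  | succ n ih =>
    have hmem : tentMap^[n] x ∈ Set.Icc (0:ℝ) 1 := tent_iterate_mem x hx n
    rw [Function.iterate_succ_apply', Function.iterate_succ_apply', ih]
    rcases Nat.even_or_odd n with he | ho
    · rw [he.neg_one_pow, one_mul, zigzag_eq_neg_tent _ hmem, pow_succ,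
        he.neg_one_pow]
      ring
    · rw [ho.neg_one_pow, neg_one_mul, zigzag_neg_eq_tent _ hmem, pow_succ,
        ho.neg_one_pow]
      ring
end

section
/- Let T be the tent map and Z the zigzag map. For every x ∈ [-1,1] and every n ∈ ℕ, |Z^[n](x)| = T^[n](|x|). That is, the zigzag map and the tent map produce iterate sequences that are equal in absolute value. -/
lemma zigzag_mem (x : ℝ) (hx : x ∈ Set.Icc (-1:ℝ) 1) :
    zigzagMap x ∈ Set.Icc (-1:ℝ) 1 := by
  obtain ⟨h1, h2⟩ := hx
  unfold zigzagMap
  split_ifs <;> constructor <;> linarith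

lemma abs_zigzag (x : ℝ) (hx : x ∈ Set.Icc (-1:ℝ) 1) :
    |zigzagMap x| = tentMap |x| := by
  obtain ⟨h1, h2⟩ := hx
  unfold zigzagMap tentMap
  rcases abs_cases x with ⟨hax, hx0⟩ | ⟨hax, hx0⟩ <;> rw [hax] <;>
    split_ifs <;> rw [abs_eq (by linarith)] <;> first | (left; linarith) | (right; linarith)

/-- For every `x ∈ [-1,1]` and every `n`, `|Z^[n] x| = T^[n] |x|`: the zigzag and tent
maps produce iterate sequences equal in absolute value. -/
theorem abs_zigzag_iterate_eq_tent_iterate_abs :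
    ∀ x ∈ Set.Icc (-1:ℝ) 1, ∀ n : ℕ,
      |zigzagMap^[n] x| = tentMap^[n] |x| := by
  intro x hx n
  induction n generalizing x with
  | zero => simp
  | succ n ih =>
    rw [Function.iterate_succ_apply, Function.iterate_succ_apply]
    rw [← abs_zigzag x hx]
    exact ih _ (zigzag_mem x hx)
end
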